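/- arXiv:1905.12425 — 2 statements merged into one kernel-verified Lean document; each statement's English description precedes it below -/
import Mathlib

section
/- Let Ω = {s₁, …, s_S} be a finite ordered set and let p̂ : 2^Ω → ℝ be a submodular set function with p̂(∅) = 0. Define q : Ω → ℝ greedily by q(s_j) = min{ p̂({s₁,…,s_j}) - Q_{j-1}, 1 - Q_{j-1} }, where Q_j = ∑_{i ≤ j} q(s_i) and Q₀ = 0. Assume p̂ is nonnegative on all sets and p̂({s₁,…,s_j}) is nondecreasing in j, so that each q(s_j) ≥ 0. Then for every subset X ⊆ Ω, ∑_{x ∈ X} q(x) ≤ p̂(X). -/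
/-- A set function is submodular. -/
def Submodular {Ω : Type*} [DecidableEq Ω] (f : Finset Ω → ℝ) : Prop :=
  ∀ X Y : Finset Ω, X ⊆ Y → ∀ x ∈ X,
    f Y - f (Y.erase x) ≤ f X - f (X.erase x)

/-- The greedy optimistic-transition assignment satisfies all `2^S` subset
constraints when the upper-bound function `p̂` is submodular.  Here the states are
`Fin S` in their natural order, `q` is defined greedily by
`q j = min (p̂ (Iic j) - Q_{j-1}) (1 - Q_{j-1})` with `Q_{j-1} = ∑_{i < j} q i`. -/
theorem greedy_respects_submodular_bounds {S : ℕ}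
    (phat : Finset (Fin S) → ℝ) (q : Fin S → ℝ)
    (hsub : Submodular phat)
    (hempty : phat ∅ = 0)
    (hnonneg : ∀ X : Finset (Fin S), 0 ≤ phat X)
    (hprefix_mono : ∀ j k : Fin S, j ≤ k → phat (Finset.Iic j) ≤ phat (Finset.Iic k))
    (hq : ∀ j : Fin S,
      q j = min (phat (Finset.Iic j) - ∑ i ∈ Finset.Iio j, q i)
                (1 - ∑ i ∈ Finset.Iio j, q i)) :
    ∀ X : Finset (Fin S), ∑ x ∈ X, q x ≤ phat X := by
  -- Structure of `Iio j`: either empty (j = 0) or `Iic j'` for the predecessor j'.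
  have hIio : ∀ j : Fin S, Finset.Iio j = ∅ ∨
      ∃ j' : Fin S, j' ≤ j ∧ Finset.Iio j = Finset.Iic j' := by
    intro j
    rcases Nat.eq_zero_or_pos j.val with h0 | hpos
    · left; ext i; simp only [Finset.mem_Iio, Finset.notMem_empty, iff_false, Fin.lt_def]
      omega
    · right
      refine ⟨⟨j.val - 1, by omega⟩, ?_, ?_⟩
      · simp only [Fin.le_def]; omega
      · ext i
        simp only [Finset.mem_Iio, Finset.mem_Iic, Fin.lt_def, Fin.le_def]
        omega
  -- Prefix sums over Iic
  have hsumIic : ∀ j : Fin S, ∑ i ∈ Finset.Iic j, q i = min (phat (Finset.Iic j)) 1 := by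
    intro j
    have hsplit : ∑ i ∈ Finset.Iic j, q i = q j + ∑ i ∈ Finset.Iio j, q i := by
      rw [← Finset.Iio_insert j, Finset.sum_insert (by simp)]
    rw [hsplit, hq j]
    set Q := ∑ i ∈ Finset.Iio j, q i with hQ
    rcases le_total (phat (Finset.Iic j)) 1 with h | h
    · rw [min_eq_left (by linarith), min_eq_left h]; ring
    · rw [min_eq_right (by linarith), min_eq_right h]; ring
  have hsumIio : ∀ j : Fin S, ∑ i ∈ Finset.Iio j, q i = min (phat (Finset.Iio j)) 1 := by
    intro j
    rcases hIio j with h | ⟨j', _, h⟩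
    · rw [h, hempty, Finset.sum_empty]
      norm_num
    · rw [h]; exact hsumIic j'
  have hIio_le : ∀ j : Fin S, phat (Finset.Iio j) ≤ phat (Finset.Iic j) := by
    intro j
    rcases hIio j with h | ⟨j', hle, h⟩
    · rw [h, hempty]; exact hnonneg _
    · rw [h]; exact hprefix_mono j' j hle
  -- Key pointwise bounds on q
  have hqle : ∀ j : Fin S, q j ≤ phat (Finset.Iic j) - phat (Finset.Iio j) := by
    intro j
    rw [hq j, hsumIio j]
    have hba := hIio_le j
    rcases le_total (phat (Finset.Iio j)) 1 with h | h
    · rw [min_eq_left h]; exact min_le_left _ _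
    · rw [min_eq_right h]
      have := min_le_right (phat (Finset.Iic j) - 1) (1 - 1)
      linarith
  have hqnonneg : ∀ j : Fin S, 0 ≤ q j := by
    intro j
    rw [hq j, hsumIio j]
    have hba := hIio_le j
    have h0b := hnonneg (Finset.Iio j)
    have h1 := min_le_left (phat (Finset.Iio j)) 1
    have h2 := min_le_right (phat (Finset.Iio j)) 1
    apply le_min <;> linarith
  intro X
  induction X using Finset.strongInduction with
  | _ X ih =>
    rcases X.eq_empty_or_nonempty with rfl | hne
    · simp [hempty]
    · set j := X.max' hne with hj
      have hjX : j ∈ X := X.max'_mem hne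
      have hXsub : X ⊆ Finset.Iic j := fun i hi => Finset.mem_Iic.2 (X.le_max' i hi)
      have hsubm := hsub X (Finset.Iic j) hXsub j hjX
      rw [Finset.Iic_erase] at hsubm
      have hIH := ih (X.erase j) (Finset.erase_ssubset hjX)
      have hsplit := (Finset.add_sum_erase X q hjX).symm
      have := hqle j
      linarith
end

section
/- Let N₁, …, N_m be positive integers with N_{t_k} = max{1, ∑_{i<k} N_i} and suppose for each k, N_k ≤ N_{t_k} (doubling condition per state-action aggregated), and ∑_k N_k = T. Then ∑_{k=1}^m N_k / √(N_{t_k}) ≤ (√2 + 1)·√T. -/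
/-!
Writing `S` for the total length of the earlier episodes and `x ≤ S` for the current one,
`x = (√(S + x) - √S)(√(S + x) + √S)` and `√(S + x) ≤ √2 √S`, so
`x / √S ≤ (√2 + 1)(√(S + x) - √S)`. Summed over the episodes, the right-hand sides telescope
to `(√2 + 1) √T`. While `S = 0` the clamp `max 1 S` forces `x ≤ 1`, and `x ≤ (√2 + 1) √x` then.
-/

open Finset

theorem Fin.sum_sub_sum_Iio_telescope {M G : Type*} [AddCommMonoid M] [AddCommGroup G]
    {m : ℕ} (g : M → G) (N : Fin m → M) :
    ∑ k, (g (∑ i < k, N i + N k) - g (∑ i < k, N i)) = g (∑ k, N k) - g 0 := by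
  induction m with
  | zero => simp
  | succ m ih =>
    have hlast : ∑ i < Fin.last m, N i = ∑ i : Fin m, N i.castSucc := by
      rw [Fin.Iio_last_eq_map, sum_map]
      rfl
    simp only [Fin.sum_univ_castSucc, Fin.sum_Iio_castSucc, ih, hlast]
    abel

theorem div_sqrt_le_mul_sqrt_add_sub_sqrt {Z x : ℝ} (hZ : 0 < Z) (hx0 : 0 ≤ x) (hxZ : x ≤ Z) :
    x / √Z ≤ (√2 + 1) * (√(Z + x) - √Z) := by
  set a := √Z
  set b := √(Z + x)
  have ha : 0 < a := Real.sqrt_pos.2 hZ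
  have hab : a ≤ b := Real.sqrt_le_sqrt (by linarith)
  have hb : b ≤ √2 * a := by
    rw [← Real.sqrt_mul zero_le_two]
    exact Real.sqrt_le_sqrt (by linarith)
  have hx : x = (b - a) * (b + a) := by
    rw [mul_comm, ← sq_sub_sq, Real.sq_sqrt (by linarith), Real.sq_sqrt hZ.le]
    ring
  rw [div_le_iff₀ ha, hx]
  calc (b - a) * (b + a) ≤ (b - a) * ((√2 + 1) * a) := by gcongr; linarith
    _ = (√2 + 1) * (b - a) * a := by ring

theorem Nat.cast_div_sqrt_max_one_le {S x : ℕ} (hx : x ≤ max 1 S) :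
    (x : ℝ) / √(max 1 S : ℕ) ≤ (√2 + 1) * (√(S + x : ℕ) - √S) := by
  rcases Nat.eq_zero_or_pos S with rfl | hS
  · have hx1 : x ≤ 1 := by simpa using hx
    interval_cases x <;> norm_num
  · rw [max_eq_right hS] at hx ⊢
    push_cast
    exact div_sqrt_le_mul_sqrt_add_sub_sqrt (by exact_mod_cast hS) x.cast_nonneg
      (by exact_mod_cast hx)

theorem episode_sum_bound_general {m : ℕ} (N : Fin m → ℕ) (T : ℕ)
    (hdouble : ∀ k : Fin m, N k ≤ max 1 (∑ i ∈ Finset.Iio k, N i))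
    (hT : ∑ k, N k = T) :
    ∑ k, (N k : ℝ) / Real.sqrt (max 1 (∑ i ∈ Finset.Iio k, N i) : ℕ) ≤
      (Real.sqrt 2 + 1) * Real.sqrt T := by
  calc ∑ k, (N k : ℝ) / √(max 1 (∑ i ∈ Iio k, N i) : ℕ)
      ≤ ∑ k, (√2 + 1) * (√(∑ i < k, N i + N k : ℕ) - √(∑ i < k, N i : ℕ)) :=
        sum_le_sum fun k _ => Nat.cast_div_sqrt_max_one_le (hdouble k)
    _ = (√2 + 1) * √T := by
        rw [← mul_sum, Fin.sum_sub_sum_Iio_telescope (fun n : ℕ => √(n : ℝ)), hT]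
        simp

/-- Standard episode-sum bound: with `N_{t_k} = max{1, ∑_{i<k} N_i}`, if each episode
length satisfies `N_k ≤ N_{t_k}` and `∑ N_k = T`, then
`∑ N_k / √(N_{t_k}) ≤ (√2 + 1)·√T`. -/
theorem episode_sum_bound {m : ℕ} (N : Fin m → ℕ) (T : ℕ)
    (hpos : ∀ k, 0 < N k)
    (hdouble : ∀ k : Fin m, N k ≤ max 1 (∑ i ∈ Finset.Iio k, N i))
    (hT : ∑ k, N k = T) :
    ∑ k, (N k : ℝ) / Real.sqrt (max 1 (∑ i ∈ Finset.Iio k, N i) : ℕ) ≤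
      (Real.sqrt 2 + 1) * Real.sqrt T :=
  episode_sum_bound_general N T hdouble hT
end
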